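/- With T as defined by T(x,y) = log x + log y + (α/θ²)log(x^θ+y^θ) - (2+α/θ)(x^θ log x + y^θ log y)/(x^θ+y^θ), and (X,Y) distributed with density f(x,y) = α(α+θ)2^{α/θ}(xy)^{θ-1}(x^θ+y^θ)^{-α/θ-2} on [1,∞)² (i.e., ε = 1), one has E[T(X,Y)] = α log 2/θ² - 1/(α+θ). -/

import Mathlib

/-!
In the coordinates `u = x ^ θ`, `v = y ^ θ` the density becomes
`r (r + 1) 2 ^ r (u + v) ^ (-r - 2)` on `[1, ∞)²` with `r = α / θ`. In these coordinates both
iterated integrals of `θ T` have elementary primitives vanishing at infinity, so the expectation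
reduces to the value of the outer primitive at `u = 1`, where only `log 2` and powers of `2`
survive. Integrability comes from `|θ T| ≤ C log (u + v)` and `log t ≤ t ^ ε / ε`.
-/

open Real Set Filter Topology MeasureTheory

lemma tendsto_log_mul_rpow_neg_atTop {c : ℝ} (hc : 0 < c) :
    Tendsto (fun t => log t * t ^ (-c)) atTop (𝓝 0) :=
  (isLittleO_log_rpow_atTop hc).tendsto_div_nhds_zero.congr' <| by
    filter_upwards [eventually_gt_atTop 0] with t ht
    rw [rpow_neg ht.le, div_eq_mul_inv]

lemma tendsto_mul_log_mul_rpow_add_atTop {a c : ℝ} (ha : 0 ≤ a) (hc : 0 < c) :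
    Tendsto (fun v => v * log v * (a + v) ^ (-c - 1)) atTop (𝓝 0) := by
  have hs : Tendsto (fun v => a + v) atTop atTop := tendsto_atTop_add_const_left _ a tendsto_id
  refine squeeze_zero' ?_ ?_ ((tendsto_log_mul_rpow_neg_atTop hc).comp hs)
  · filter_upwards [eventually_ge_atTop 1] with v hv
    have := log_nonneg hv
    have : 0 < a + v := by linarith
    positivity
  · filter_upwards [eventually_ge_atTop 1] with v hv
    have hs : 0 < a + v := by linarith
    have hvs : v * log v ≤ (a + v) * log (a + v) :=
      mul_le_mul (by linarith) (log_le_log (by linarith) (by linarith)) (log_nonneg hv) hs.le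
    calc v * log v * (a + v) ^ (-c - 1) ≤ (a + v) * log (a + v) * (a + v) ^ (-c - 1) :=
          mul_le_mul_of_nonneg_right hvs (by positivity)
      _ = log (a + v) * (a + v) ^ (-c) := by
          rw [rpow_sub_one hs.ne']
          field_simp

lemma integrableOn_Ioi_one_add_log_mul_rpow {a q : ℝ} (ha : 0 ≤ a) (hq : 1 < q) :
    IntegrableOn (fun v => (1 + log (a + v)) * (a + v) ^ (-q)) (Ioi 1) := by
  set ε := (q - 1) / 2 with hε_def
  have hε : 0 < ε := by linarith
  refine ((integrableOn_Ioi_rpow_of_lt (a := ε - q) (by linarith) one_pos).const_mul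
    (1 + ε⁻¹)).mono' (by fun_prop) ?_
  filter_upwards [ae_restrict_mem measurableSet_Ioi] with v (hv : 1 < v)
  have ht : 1 ≤ a + v := by linarith
  have hlog : 1 + log (a + v) ≤ (1 + ε⁻¹) * (a + v) ^ ε := by
    have h1 : 1 ≤ (a + v) ^ ε := one_le_rpow ht hε.le
    have h2 := log_le_rpow_div (by linarith : 0 ≤ a + v) hε
    rw [div_eq_mul_inv] at h2
    nlinarith [inv_pos.mpr hε]
  rw [norm_of_nonneg (mul_nonneg (by linarith [log_nonneg ht]) (by positivity))]
  calc (1 + log (a + v)) * (a + v) ^ (-q) ≤ (1 + ε⁻¹) * (a + v) ^ ε * (a + v) ^ (-q) :=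
        mul_le_mul_of_nonneg_right hlog (by positivity)
    _ = (1 + ε⁻¹) * (a + v) ^ (ε - q) := by
        rw [mul_assoc, ← rpow_add (by linarith), sub_eq_add_neg]
    _ ≤ (1 + ε⁻¹) * v ^ (ε - q) :=
        mul_le_mul_of_nonneg_left
          (rpow_le_rpow_of_nonpos (by linarith) (le_add_of_nonneg_left ha) (by linarith))
          (by positivity)

lemma integral_Ioi_one_rpow_mul_comp_rpow {θ : ℝ} (hθ : 0 < θ) (g : ℝ → ℝ) :
    ∫ x in Ioi 1, x ^ (θ - 1) * g (x ^ θ) = θ⁻¹ * ∫ u in Ioi 1, g u := by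
  have h := integral_comp_rpow_Ioi_of_pos' (g := g) hθ zero_le_one
  simp only [one_rpow, smul_eq_mul, mul_assoc, integral_const_mul] at h
  rw [← h, inv_mul_cancel_left₀ hθ.ne']

namespace Clayton

/-- `θ T(x, y)` in the coordinates `u = x ^ θ`, `v = y ^ θ`, with `r = α / θ`. -/
noncomputable def score (r u v : ℝ) : ℝ :=
  log u + log v + r * log (u + v) - (2 + r) * ((u * log u + v * log v) / (u + v))

noncomputable def scorePrimitive (r u v : ℝ) : ℝ :=
  (u * log u + v * log v) * (u + v) ^ (-r - 2) -
    ((log u - (r + 1)⁻¹) / (r + 1) + r / (r + 1) * log (u + v)) * (u + v) ^ (-r - 1)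

noncomputable def outerPrimitive (r u : ℝ) : ℝ :=
  (u * log u * (u + 1) ^ (-r - 1) - log (u + 1) * (u + 1) ^ (-r)) / (r + 1) +
    (u + 1) ^ (-r) / (r * (r + 1) ^ 2)

variable {r u v : ℝ}

lemma score_rpow_div {α θ x y : ℝ} (hθ : θ ≠ 0) (hx : 0 < x) (hy : 0 < y) :
    score (α / θ) (x ^ θ) (y ^ θ) / θ =
      log x + log y + α / θ ^ 2 * log (x ^ θ + y ^ θ) -
        (2 + α / θ) * ((x ^ θ * log x + y ^ θ * log y) / (x ^ θ + y ^ θ)) := by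
  rw [score, log_rpow hx, log_rpow hy]
  field_simp

lemma hasDerivAt_scorePrimitive (hr : r + 1 ≠ 0) (hu : 0 < u) (hv : 0 < v) :
    HasDerivAt (scorePrimitive r u) (score r u v * (u + v) ^ (-r - 2)) v := by
  have hs : 0 < u + v := add_pos hu hv
  have ds : HasDerivAt (fun v => u + v) 1 v := (hasDerivAt_id v).const_add u
  have h := (((hasDerivAt_mul_log hv.ne').const_add (u * log u)).mul
    (ds.rpow_const (p := -r - 2) (Or.inl hs.ne'))).sub
    ((((ds.log hs.ne').const_mul (r / (r + 1))).const_add ((log u - (r + 1)⁻¹) / (r + 1))).mul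
      (ds.rpow_const (p := -r - 1) (Or.inl hs.ne')))
  refine h.congr_deriv ?_
  have e1 : (u + v) ^ (-r - 1) = (u + v) ^ (-r - 2) * (u + v) := by
    rw [← rpow_add_one hs.ne']; ring_nf
  have e2 : (u + v) ^ (-r - 2 - 1) = (u + v) ^ (-r - 2) / (u + v) := rpow_sub_one hs.ne' _
  have e3 : (u + v) ^ (-r - 1 - 1) = (u + v) ^ (-r - 2) := by ring_nf
  rw [e2, e3, e1, score]
  field_simp
  ring

lemma tendsto_scorePrimitive_atTop (hr : -1 < r) (hu : 0 ≤ u) :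
    Tendsto (scorePrimitive r u) atTop (𝓝 0) := by
  have hs : Tendsto (fun v => u + v) atTop atTop := tendsto_atTop_add_const_left _ u tendsto_id
  have hpow : ∀ c : ℝ, 0 < c → Tendsto (fun v => (u + v) ^ (-c)) atTop (𝓝 0) :=
    fun c hc => (tendsto_rpow_neg_atTop hc).comp hs
  have h := (((hpow _ (by linarith : 0 < r + 2)).const_mul (u * log u)).add
      (tendsto_mul_log_mul_rpow_add_atTop hu (by linarith : 0 < r + 1))).sub
    (((hpow _ (by linarith : 0 < r + 1)).const_mul ((log u - (r + 1)⁻¹) / (r + 1))).add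
      (((tendsto_log_mul_rpow_neg_atTop (by linarith : 0 < r + 1)).comp hs).const_mul
        (r / (r + 1))))
  simp only [mul_zero, add_zero, sub_zero] at h
  refine h.congr fun v => ?_
  simp only [scorePrimitive, Function.comp_apply]
  ring_nf

lemma abs_score_le (hr : -2 ≤ r) (hu : 1 ≤ u) (hv : 1 ≤ v) :
    |score r u v| ≤ (4 + |r| + r) * log (u + v) := by
  set L := log (u + v)
  have hlu : log u ≤ L := log_le_log (by linarith) (by linarith)
  have hlv : log v ≤ L := log_le_log (by linarith) (by linarith)
  have hlu0 := log_nonneg hu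
  have hlv0 := log_nonneg hv
  have hM : (u * log u + v * log v) / (u + v) ≤ L := by
    rw [div_le_iff₀ (by linarith)]
    nlinarith
  have hM0 : 0 ≤ (u * log u + v * log v) / (u + v) := by positivity
  have hrL : |r * L| ≤ |r| * L := by rw [abs_mul, abs_of_nonneg (hlu0.trans hlu)]
  have h2r : (2 + r) * ((u * log u + v * log v) / (u + v)) ≤ (2 + r) * L :=
    mul_le_mul_of_nonneg_left hM (by linarith)
  have h2r0 : 0 ≤ (2 + r) * ((u * log u + v * log v) / (u + v)) :=
    mul_nonneg (by linarith) hM0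
  have := abs_le.mp hrL
  rw [score, abs_le]
  constructor <;> linarith [mul_nonneg (abs_nonneg r) (hlu0.trans hlu)]

lemma integrableOn_score_mul_rpow (hr : -1 < r) (hu : 1 ≤ u) :
    IntegrableOn (fun v => score r u v * (u + v) ^ (-r - 2)) (Ioi 1) := by
  refine ((integrableOn_Ioi_one_add_log_mul_rpow (a := u) (q := r + 2) (by linarith)
    (by linarith)).const_mul (4 + |r| + r)).mono' (by unfold score; fun_prop) ?_
  filter_upwards [ae_restrict_mem measurableSet_Ioi] with v (hv : 1 < v)
  have hs : 0 < u + v := by linarith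
  have hC : 0 ≤ 4 + |r| + r := by linarith [neg_abs_le r]
  rw [norm_mul, norm_of_nonneg (rpow_nonneg hs.le _), Real.norm_eq_abs, neg_add']
  calc |score r u v| * (u + v) ^ (-r - 2)
      ≤ (4 + |r| + r) * log (u + v) * (u + v) ^ (-r - 2) :=
        mul_le_mul_of_nonneg_right (abs_score_le (by linarith) hu hv.le) (by positivity)
    _ ≤ (4 + |r| + r) * ((1 + log (u + v)) * (u + v) ^ (-r - 2)) := by
        rw [mul_assoc]
        gcongr
        linarith

lemma integral_score_mul_rpow (hr : -1 < r) (hu : 1 ≤ u) :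
    ∫ v in Ioi 1, score r u v * (u + v) ^ (-r - 2) = -scorePrimitive r u 1 := by
  rw [integral_Ioi_of_hasDerivAt_of_tendsto'
      (fun v hv => hasDerivAt_scorePrimitive (by linarith) (by linarith) (one_pos.trans_le hv))
      (integrableOn_score_mul_rpow hr hu) (tendsto_scorePrimitive_atTop hr (by linarith)),
    zero_sub]

lemma hasDerivAt_outerPrimitive (hr₀ : r ≠ 0) (hr₁ : r + 1 ≠ 0) (hu : 0 < u) :
    HasDerivAt (outerPrimitive r) (-scorePrimitive r u 1) u := by
  have hw : 0 < u + 1 := by linarith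
  have dw : HasDerivAt (fun u => u + 1) 1 u := (hasDerivAt_id u).add_const 1
  have h := ((((hasDerivAt_mul_log hu.ne').mul
      (dw.rpow_const (p := -r - 1) (Or.inl hw.ne'))).sub
    ((dw.log hw.ne').mul (dw.rpow_const (p := -r) (Or.inl hw.ne')))).div_const (r + 1)).add
    ((dw.rpow_const (p := -r) (Or.inl hw.ne')).div_const (r * (r + 1) ^ 2))
  refine h.congr_deriv ?_
  have e1 : (u + 1) ^ (-r) = (u + 1) ^ (-r - 1) * (u + 1) := by
    rw [← rpow_add_one hw.ne']; ring_nf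
  have e2 : (u + 1) ^ (-r - 1 - 1) = (u + 1) ^ (-r - 1) / (u + 1) := rpow_sub_one hw.ne' _
  have e3 : (u + 1) ^ (-r - 2) = (u + 1) ^ (-r - 1) / (u + 1) := by
    rw [← e2]; ring_nf
  rw [scorePrimitive, e2, e3, e1, log_one]
  field_simp
  ring

lemma tendsto_outerPrimitive_atTop (hr : 0 < r) :
    Tendsto (outerPrimitive r) atTop (𝓝 0) := by
  have hs : Tendsto (fun u : ℝ => 1 + u) atTop atTop :=
    tendsto_atTop_add_const_left _ 1 tendsto_id
  have h := (((tendsto_mul_log_mul_rpow_add_atTop zero_le_one hr).sub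
      ((tendsto_log_mul_rpow_neg_atTop hr).comp hs)).div_const (r + 1)).add
    (((tendsto_rpow_neg_atTop hr).comp hs).div_const (r * (r + 1) ^ 2))
  simp only [sub_zero, zero_div, add_zero] at h
  refine h.congr fun u => ?_
  simp only [outerPrimitive, Function.comp_apply, add_comm 1 u]

lemma abs_scorePrimitive_one_le (hr : 0 ≤ r) (hu : 1 ≤ u) :
    |scorePrimitive r u 1| ≤ 3 * ((1 + log (1 + u)) * (1 + u) ^ (-(r + 1))) := by
  have hw : 0 < u + 1 := by linarith
  set P := (u + 1) ^ (-r - 1)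
  set L := log (u + 1)
  set ρ := (r + 1)⁻¹
  have hP : 0 ≤ P := by positivity
  have hl0 := log_nonneg hu
  have hl : log u ≤ L := log_le_log (by linarith) (by linarith)
  have hρ0 : 0 ≤ ρ := by positivity
  have hρ : ρ ≤ 1 := inv_le_one_of_one_le₀ (by linarith)
  have hrρ : r * ρ ≤ 1 := by
    rw [← div_eq_mul_inv]
    exact div_le_one_of_le₀ (by linarith) (by linarith)
  have hH : scorePrimitive r u 1 =
      P * (u / (u + 1) * log u - ((log u - ρ) * ρ + r * ρ * L)) := by
    rw [scorePrimitive, show -r - 2 = -r - 1 - 1 by ring, rpow_sub_one hw.ne', log_one]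
    simp only [P, L, ρ]
    field_simp
    ring
  have hk : |u / (u + 1) * log u - ((log u - ρ) * ρ + r * ρ * L)| ≤ 3 * (1 + L) := by
    have p1 : u / (u + 1) * log u ≤ log u :=
      mul_le_of_le_one_left hl0 (div_le_one_of_le₀ (by linarith) hw.le)
    have p1' : 0 ≤ u / (u + 1) * log u := by positivity
    have p2 : log u * ρ ≤ log u := mul_le_of_le_one_right hl0 hρ
    have p2' : 0 ≤ log u * ρ := by positivity
    have p3 : ρ * ρ ≤ 1 := mul_le_one₀ hρ hρ0 hρ
    have p3' : 0 ≤ ρ * ρ := by positivity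
    have p4 : r * ρ * L ≤ L := mul_le_of_le_one_left (hl0.trans hl) hrρ
    have p4' : 0 ≤ r * ρ * L := mul_nonneg (by positivity) (hl0.trans hl)
    rw [abs_le]
    constructor <;> linarith
  rw [hH, abs_mul, abs_of_nonneg hP, add_comm 1 u, neg_add']
  linarith [mul_le_mul_of_nonneg_left hk hP]

lemma integral_neg_scorePrimitive_one (hr : 0 < r) :
    ∫ u in Ioi 1, -scorePrimitive r u 1 =
      2 ^ (-r) * (log 2 / (r + 1) - 1 / (r * (r + 1) ^ 2)) := by
  have hint : IntegrableOn (fun u => -scorePrimitive r u 1) (Ioi 1) := by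
    refine ((integrableOn_Ioi_one_add_log_mul_rpow zero_le_one
      (by linarith : 1 < r + 1)).const_mul 3).mono' (by unfold scorePrimitive; fun_prop) ?_
    filter_upwards [ae_restrict_mem measurableSet_Ioi] with u (hu : 1 < u)
    rw [norm_neg, Real.norm_eq_abs]
    exact abs_scorePrimitive_one_le hr.le hu.le
  rw [integral_Ioi_of_hasDerivAt_of_tendsto'
      (fun u hu => hasDerivAt_outerPrimitive hr.ne' (by linarith) (one_pos.trans_le hu)) hint
      (tendsto_outerPrimitive_atTop hr),
    zero_sub, outerPrimitive]
  norm_num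
  field_simp
  ring

end Clayton

theorem stmt_13_general (α θ : ℝ) (hα : 0 < α) (hθ : 0 < θ)
    (T f : ℝ → ℝ → ℝ)
    (hT : ∀ x y : ℝ, T x y =
      Real.log x + Real.log y + (α / θ ^ 2) * Real.log (x ^ θ + y ^ θ) -
        (2 + α/θ) * ((x ^ θ * Real.log x + y ^ θ * Real.log y) / (x ^ θ + y ^ θ)))
    (hf : ∀ x y : ℝ, f x y = α * (α + θ) * 2 ^ (α/θ) *
      (x * y) ^ (θ - 1) * (x ^ θ + y ^ θ) ^ (-α/θ - 2)) :
    (∫ x in Set.Ici (1:ℝ), ∫ y in Set.Ici (1:ℝ), T x y * f x y) =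
      α * Real.log 2 / θ ^ 2 - 1 / (α + θ) := by
  have hr : 0 < α / θ := div_pos hα hθ
  have inner : ∀ x ∈ Ioi (1 : ℝ), ∫ y in Ici 1, T x y * f x y =
      α * (α + θ) * 2 ^ (α / θ) / θ ^ 2 *
        (x ^ (θ - 1) * -Clayton.scorePrimitive (α / θ) (x ^ θ) 1) := by
    intro x hx
    have hTf : ∀ y ∈ Ioi (1 : ℝ), T x y * f x y =
        α * (α + θ) * 2 ^ (α / θ) / θ * x ^ (θ - 1) *
          (y ^ (θ - 1) *
            (Clayton.score (α / θ) (x ^ θ) (y ^ θ) * (x ^ θ + y ^ θ) ^ (-(α / θ) - 2))) := by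
      intro y hy
      have hx0 : 0 < x := one_pos.trans hx
      have hy0 : 0 < y := one_pos.trans hy
      rw [hT, hf, ← Clayton.score_rpow_div hθ.ne' hx0 hy0, mul_rpow hx0.le hy0.le, neg_div]
      ring
    rw [integral_Ici_eq_integral_Ioi, setIntegral_congr_fun measurableSet_Ioi hTf,
      integral_const_mul, integral_Ioi_one_rpow_mul_comp_rpow hθ
        (fun v => Clayton.score (α / θ) (x ^ θ) v * (x ^ θ + v) ^ (-(α / θ) - 2)),
      Clayton.integral_score_mul_rpow (by linarith) (one_le_rpow hx.le hθ.le)]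
    ring
  rw [integral_Ici_eq_integral_Ioi, setIntegral_congr_fun measurableSet_Ioi inner,
    integral_const_mul,
    integral_Ioi_one_rpow_mul_comp_rpow hθ (fun u => -Clayton.scorePrimitive (α / θ) u 1),
    Clayton.integral_neg_scorePrimitive_one hr, rpow_neg zero_le_two]
  field_simp

/-- Mean of the θ-score function under the joint jump density (ε = 1):
`E[T(X,Y)] = α log 2/θ² - 1/(α+θ)`. -/
theorem stmt_13 (α θ : ℝ) (hα : 0 < α) (hθ : 0 < θ)
    (T f : ℝ → ℝ → ℝ)
    (hT : ∀ x y : ℝ, T x y =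
      Real.log x + Real.log y + (α / θ ^ 2) * Real.log (x ^ θ + y ^ θ) -
        (2 + α/θ) * ((x ^ θ * Real.log x + y ^ θ * Real.log y) / (x ^ θ + y ^ θ)))
    (hf : ∀ x y : ℝ, f x y = α * (α + θ) * 2 ^ (α/θ) *
      (x * y) ^ (θ - 1) * (x ^ θ + y ^ θ) ^ (-α/θ - 2))
    (hf1 : (∫ x in Set.Ici (1:ℝ), ∫ y in Set.Ici (1:ℝ), f x y) = 1) :
    (∫ x in Set.Ici (1:ℝ), ∫ y in Set.Ici (1:ℝ), T x y * f x y) =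
      α * Real.log 2 / θ ^ 2 - 1 / (α + θ) :=
  stmt_13_general α θ hα hθ T f hT hf
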